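/- Let I be an instance of SPA-ST. For any two super-stable matchings M1 and M2 in I, a student is unmatched in M1 if and only if she is unmatched in M2. -/

import Mathlib

open scoped Classical

/-- An instance of the Student-Project Allocation problem with lecturer
preferences over students, with Ties (SPA-ST).  `sPref s p q` means student `s`
ranks project `p` at least as highly as project `q` (`p ⪰_s q`); `lPref k t t'`
means lecturer `k` ranks student `t` at least as highly as student `t'`. -/
structure SPAST (S P L : Type) [Fintype S] [Fintype P] [Fintype L]
    [DecidableEq S] [DecidableEq P] [DecidableEq L] where
  /-- the lecturer offering each project -/
  lec : P → L
  /-- project capacities -/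
  c : P → ℕ
  /-- lecturer capacities -/
  d : L → ℕ
  cpos : ∀ p : P, 0 < c p
  dpos : ∀ k : L, 0 < d k
  /-- the set of projects acceptable to each student -/
  acc : S → Finset P
  sPref : S → P → P → Prop
  lPref : L → S → S → Prop
  sRefl : ∀ s : S, ∀ p ∈ acc s, sPref s p p
  sTrans : ∀ s : S, ∀ p ∈ acc s, ∀ q ∈ acc s, ∀ r ∈ acc s,
    sPref s p q → sPref s q r → sPref s p r
  sTotal : ∀ s : S, ∀ p ∈ acc s, ∀ q ∈ acc s, sPref s p q ∨ sPref s q p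
  lRefl : ∀ k : L, ∀ t : S, (∃ p ∈ acc t, lec p = k) → lPref k t t
  lTrans : ∀ k : L, ∀ t1 t2 t3 : S,
    (∃ p ∈ acc t1, lec p = k) → (∃ p ∈ acc t2, lec p = k) → (∃ p ∈ acc t3, lec p = k) →
    lPref k t1 t2 → lPref k t2 t3 → lPref k t1 t3
  lTotal : ∀ k : L, ∀ t1 t2 : S,
    (∃ p ∈ acc t1, lec p = k) → (∃ p ∈ acc t2, lec p = k) →
    lPref k t1 t2 ∨ lPref k t2 t1
  capLB : ∀ p : P, c p ≤ d (lec p)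
  capUB : ∀ k : L, d k ≤ ∑ p ∈ Finset.univ.filter (fun p => lec p = k), c p

namespace SPAST

variable {S P L : Type} [Fintype S] [Fintype P] [Fintype L]
  [DecidableEq S] [DecidableEq P] [DecidableEq L]

/-- `M` is a matching: pairs are acceptable, each student is matched at most once,
and project and lecturer capacities are respected. -/
def IsMatching (I : SPAST S P L) (M : Finset (S × P)) : Prop :=
  (∀ x ∈ M, x.2 ∈ I.acc x.1) ∧
  (∀ s : S, ∀ p q : P, (s, p) ∈ M → (s, q) ∈ M → p = q) ∧
  (∀ p : P, (M.filter (fun x => x.2 = p)).card ≤ I.c p) ∧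
  (∀ k : L, (M.filter (fun x => I.lec x.2 = k)).card ≤ I.d k)

/-- The set `M(p)` of students assigned to project `p` in `M`. -/
def projAsg (M : Finset (S × P)) (p : P) : Finset S :=
  (M.filter (fun x => x.2 = p)).image Prod.fst

/-- The set `M(l_k)` of students assigned to lecturer `k` in `M`. -/
def lecAsg (I : SPAST S P L) (M : Finset (S × P)) (k : L) : Finset S :=
  (M.filter (fun x => I.lec x.2 = k)).image Prod.fst

/-- `t` is a least-preferred (worst) student of lecturer `k` in the set `T`. -/
def WorstIn (I : SPAST S P L) (k : L) (T : Finset S) (t : S) : Prop :=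
  t ∈ T ∧ ∀ t' ∈ T, I.lPref k t' t

/-- `(s, p)` is a super-blocking pair for `M`. -/
def SuperBlocking (I : SPAST S P L) (M : Finset (S × P)) (s : S) (p : P) : Prop :=
  p ∈ I.acc s ∧ (s, p) ∉ M ∧
  (∀ q : P, (s, q) ∈ M → ¬(I.sPref s q p ∧ ¬I.sPref s p q)) ∧
  (((projAsg M p).card < I.c p ∧ (lecAsg I M (I.lec p)).card < I.d (I.lec p)) ∨
   ((projAsg M p).card < I.c p ∧ (lecAsg I M (I.lec p)).card = I.d (I.lec p) ∧
     (s ∈ lecAsg I M (I.lec p) ∨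
      ∃ t : S, WorstIn I (I.lec p) (lecAsg I M (I.lec p)) t ∧ I.lPref (I.lec p) s t)) ∨
   ((projAsg M p).card = I.c p ∧
     ∃ t : S, WorstIn I (I.lec p) (projAsg M p) t ∧ I.lPref (I.lec p) s t))

/-- `(s, p)` is a weakly-blocking pair for `M`. -/
def WeakBlocking (I : SPAST S P L) (M : Finset (S × P)) (s : S) (p : P) : Prop :=
  p ∈ I.acc s ∧ (s, p) ∉ M ∧
  (∀ q : P, (s, q) ∈ M → I.sPref s p q ∧ ¬I.sPref s q p) ∧
  (((projAsg M p).card < I.c p ∧ (lecAsg I M (I.lec p)).card < I.d (I.lec p)) ∨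
   ((projAsg M p).card < I.c p ∧ (lecAsg I M (I.lec p)).card = I.d (I.lec p) ∧
     (s ∈ lecAsg I M (I.lec p) ∨
      ∃ t : S, WorstIn I (I.lec p) (lecAsg I M (I.lec p)) t ∧
        (I.lPref (I.lec p) s t ∧ ¬I.lPref (I.lec p) t s))) ∨
   ((projAsg M p).card = I.c p ∧
     ∃ t : S, WorstIn I (I.lec p) (projAsg M p) t ∧
       (I.lPref (I.lec p) s t ∧ ¬I.lPref (I.lec p) t s)))

/-- `M` is a super-stable matching in `I`. -/
def SuperStable (I : SPAST S P L) (M : Finset (S × P)) : Prop :=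
  I.IsMatching M ∧ ∀ (s : S) (p : P), ¬SuperBlocking I M s p

/-- `M` is a weakly stable matching in `I`. -/
def WeaklyStable (I : SPAST S P L) (M : Finset (S × P)) : Prop :=
  I.IsMatching M ∧ ∀ (s : S) (p : P), ¬WeakBlocking I M s p

/-- `I` is an SPA-S instance: all preference lists are strictly ordered
(the preorders are antisymmetric). -/
def StrictPrefs (I : SPAST S P L) : Prop :=
  (∀ s : S, ∀ p ∈ I.acc s, ∀ q ∈ I.acc s, I.sPref s p q → I.sPref s q p → p = q) ∧
  (∀ k : L, ∀ t t' : S, (∃ p ∈ I.acc t, I.lec p = k) → (∃ p ∈ I.acc t', I.lec p = k) →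
    I.lPref k t t' → I.lPref k t' t → t = t')

/-- `I'` is an SPA-S instance obtained from `I` by breaking the ties. -/
def TieBreaking (I I' : SPAST S P L) : Prop :=
  I'.lec = I.lec ∧ I'.c = I.c ∧ I'.d = I.d ∧ I'.acc = I.acc ∧
  StrictPrefs I' ∧
  (∀ (s : S) (p q : P), I.sPref s p q → ¬I.sPref s q p →
    I'.sPref s p q ∧ ¬I'.sPref s q p) ∧
  (∀ (k : L) (t t' : S), I.lPref k t t' → ¬I.lPref k t' t →
    I'.lPref k t t' ∧ ¬I'.lPref k t' t)

end SPAST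

/-!
Call a student *regressing* from `M` to `M'` if her pair in `M` is not in `M'` and she does not
strictly prefer her `M'`-project to it. If `s` regresses at `p`, super-stability of `M'` makes
`p` or `l(p)` full in `M'` with students that `l(p)` strictly prefers to `s`. Conversely, a student
who enters `p` in `M'` without regressing is, by super-stability of `M`, strictly worse for `l(p)`
than everybody at `p` (or at `l(p)`) in `M`, in particular than `s`. So every newcomer at a project
that a regressing student leaves regresses herself.

Fix a lecturer `l`. If some regressing student is kept out by `l` being full in `M'`, every
project of `l` either has only regressing newcomers or is full in `M`, so, `l` being full in `M'`,
the former projects hold at least as many pairs of `M'` as of `M`. Otherwise every project that a regressing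
student leaves is full in `M'`. Either way `l` has at least as many regressing students in `M'` as
in `M`. Summing over the lecturers, every regressing student is matched in `M'`, and a student
matched in `M` but not in `M'` regresses.
-/

namespace SPAST

section projAsg

variable {S P : Type} [DecidableEq S] [DecidableEq P] {M : Finset (S × P)} {u : S} {p : P}

theorem mem_projAsg : u ∈ projAsg M p ↔ (u, p) ∈ M := by
  simp [projAsg]

theorem card_projAsg : (projAsg M p).card = (M.filter (·.2 = p)).card :=
  Finset.card_image_of_injOn fun x hx y hy hxy => by
    simp only [Finset.coe_filter] at hx hy
    exact Prod.ext hxy (hx.2.trans hy.2.symm)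

end projAsg

variable {S P L : Type} [Fintype S] [Fintype P] [Fintype L]
  [DecidableEq S] [DecidableEq P] [DecidableEq L]
  {I : SPAST S P L} {M M' : Finset (S × P)} {s t u : S} {p q : P} {k : L}

variable (I) in
def sPrefStrict (s : S) (p q : P) : Prop := I.sPref s p q ∧ ¬I.sPref s q p

variable (I) in
def lPrefStrict (k : L) (t u : S) : Prop := I.lPref k t u ∧ ¬I.lPref k u t

theorem sPrefStrict.asymm (h : I.sPrefStrict s p q) : ¬I.sPrefStrict s q p :=
  fun h' => h.2 h'.1

theorem lPrefStrict.asymm (h : I.lPrefStrict k t u) : ¬I.lPrefStrict k u t :=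
  fun h' => h.2 h'.1

theorem exists_worstIn {T : Finset S} (hT : T.Nonempty)
    (hrel : ∀ t ∈ T, ∃ p ∈ I.acc t, I.lec p = k) : ∃ w, I.WorstIn k T w := by
  obtain ⟨w, hw, hmax⟩ := T.exists_max_image (fun w => (T.filter (I.lPref k · w)).card) hT
  refine ⟨w, hw, fun t ht => ?_⟩
  by_contra htw
  have hwt : I.lPref k w t := (I.lTotal k t w (hrel t ht) (hrel w hw)).resolve_left htw
  have hlt : T.filter (I.lPref k · w) ⊂ T.filter (I.lPref k · t) := by
    refine Finset.ssubset_iff_of_subset (fun v hv => ?_) |>.2 ⟨t, ?_, ?_⟩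
    · simp only [Finset.mem_filter] at hv ⊢
      exact ⟨hv.1, I.lTrans k v w t (hrel v hv.1) (hrel w hw) (hrel t ht) hv.2 hwt⟩
    · exact Finset.mem_filter.2 ⟨ht, I.lRefl k t (hrel t ht)⟩
    · simpa using fun _ => htw
  exact (Finset.card_lt_card hlt).not_ge (hmax t ht)

theorem lPrefStrict_of_not_worstIn {T : Finset S} (hT : T.Nonempty)
    (hrel : ∀ t ∈ T, ∃ p ∈ I.acc t, I.lec p = k) (hs : ∃ p ∈ I.acc s, I.lec p = k)
    (h : ¬∃ w, I.WorstIn k T w ∧ I.lPref k s w) : ∀ u ∈ T, I.lPrefStrict k u s := by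
  obtain ⟨w, hw, hworst⟩ := exists_worstIn hT hrel
  have hsw : ¬I.lPref k s w := fun hsw => h ⟨w, ⟨hw, hworst⟩, hsw⟩
  have hws : I.lPref k w s := (I.lTotal k s w hs (hrel w hw)).resolve_left hsw
  intro u hu
  refine ⟨I.lTrans k u w s (hrel u hu) (hrel w hw) hs (hworst u hu) hws, fun hsu => hsw ?_⟩
  exact I.lTrans k s u w hs (hrel u hu) (hrel w hw) hsu (hworst u hu)

theorem mem_lecAsg : u ∈ lecAsg I M k ↔ ∃ q, (u, q) ∈ M ∧ I.lec q = k := by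
  simp [lecAsg]

theorem IsMatching.acc (hM : I.IsMatching M) (hup : (u, p) ∈ M) : p ∈ I.acc u :=
  hM.1 _ hup

theorem IsMatching.eq_of_mem (hM : I.IsMatching M) (hsp : (s, p) ∈ M) (hsq : (s, q) ∈ M) :
    p = q :=
  hM.2.1 s p q hsp hsq

theorem IsMatching.injOn_fst (hM : I.IsMatching M) : Set.InjOn Prod.fst (M : Set (S × P)) :=
  fun x hx _ hy hxy => Prod.ext hxy (hM.eq_of_mem (s := x.1) hx (hxy ▸ hy))

theorem IsMatching.card_lecAsg (hM : I.IsMatching M) :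
    (lecAsg I M k).card = (M.filter (I.lec ·.2 = k)).card :=
  Finset.card_image_of_injOn (hM.injOn_fst.mono (Finset.coe_subset.2 (Finset.filter_subset _ _)))

variable (I) in
def Outranked (M : Finset (S × P)) (s : S) (p : P) : Prop :=
  ((M.filter (·.2 = p)).card = I.c p ∧ ∀ u, (u, p) ∈ M → I.lPrefStrict (I.lec p) u s) ∨
  ((M.filter (I.lec ·.2 = I.lec p)).card = I.d (I.lec p) ∧
    ∀ u q, (u, q) ∈ M → I.lec q = I.lec p → I.lPrefStrict (I.lec p) u s)

theorem Outranked.lPrefStrict (h : I.Outranked M s p) (hup : (u, p) ∈ M) :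
    I.lPrefStrict (I.lec p) u s := by
  rcases h with ⟨-, h⟩ | ⟨-, h⟩
  exacts [h u hup, h u p hup rfl]

theorem SuperStable.outranked (hM : I.SuperStable M) (hp : p ∈ I.acc s) (hsp : (s, p) ∉ M)
    (hs : ∀ q, (s, q) ∈ M → ¬I.sPrefStrict s q p) : I.Outranked M s p := by
  have hnb := fun h => hM.2 s p ⟨hp, hsp, hs, h⟩
  simp only [imp_false, not_or, not_and] at hnb
  obtain ⟨hund, hlec, hproj⟩ := hnb
  have hs : ∃ q ∈ I.acc s, I.lec q = I.lec p := ⟨p, hp, rfl⟩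
  by_cases hpfree : (projAsg M p).card < I.c p
  · right
    have hd : (lecAsg I M (I.lec p)).card = I.d (I.lec p) := by
      have := hM.1.2.2.2 (I.lec p)
      rw [← hM.1.card_lecAsg] at this
      exact le_antisymm this (not_lt.1 (hund hpfree))
    have hne : (lecAsg I M (I.lec p)).Nonempty := by
      rw [← Finset.card_pos, hd]; exact I.dpos _
    have hrel : ∀ t ∈ lecAsg I M (I.lec p), ∃ q ∈ I.acc t, I.lec q = I.lec p := by
      intro t ht
      obtain ⟨q, htq, hq⟩ := mem_lecAsg.1 ht
      exact ⟨q, hM.1.acc htq, hq⟩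
    refine ⟨hM.1.card_lecAsg ▸ hd, fun u q huq hq => ?_⟩
    exact lPrefStrict_of_not_worstIn hne hrel hs (hlec hpfree hd).2 u (mem_lecAsg.2 ⟨q, huq, hq⟩)
  · left
    have hc : (projAsg M p).card = I.c p :=
      le_antisymm (card_projAsg (M := M) (p := p) ▸ hM.1.2.2.1 p) (not_lt.1 hpfree)
    have hne : (projAsg M p).Nonempty := by
      rw [← Finset.card_pos, hc]; exact I.cpos _
    have hrel : ∀ t ∈ projAsg M p, ∃ q ∈ I.acc t, I.lec q = I.lec p :=
      fun t ht => ⟨p, hM.1.acc (mem_projAsg.1 ht), rfl⟩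
    refine ⟨card_projAsg (M := M) (p := p) ▸ hc, fun u hup => ?_⟩
    exact lPrefStrict_of_not_worstIn hne hrel hs (hproj hc) u (mem_projAsg.2 hup)

variable (I) in
def Regresses (M M' : Finset (S × P)) (s : S) : Prop :=
  ∃ p, (s, p) ∈ M ∧ (s, p) ∉ M' ∧ ∀ q, (s, q) ∈ M' → ¬I.sPrefStrict s q p

theorem Regresses.not_mem (hM : I.IsMatching M) (hs : I.Regresses M M' s) (hsp : (s, p) ∈ M) :
    (s, p) ∉ M' := by
  obtain ⟨p', hsp', hsp'M', -⟩ := hs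
  rwa [hM.eq_of_mem hsp hsp']

theorem Regresses.outranked (hM : I.IsMatching M) (hM' : I.SuperStable M')
    (hs : I.Regresses M M' s) (hsp : (s, p) ∈ M) : I.Outranked M' s p := by
  obtain ⟨p', hsp', hsp'M', hpref⟩ := hs
  obtain rfl := hM.eq_of_mem hsp hsp'
  exact hM'.outranked (hM.acc hsp) hsp'M' hpref

theorem regresses_or_outranked (hM : I.SuperStable M) (hM' : I.IsMatching M')
    (htq : (t, q) ∈ M') (htqM : (t, q) ∉ M) : I.Regresses M M' t ∨ I.Outranked M t q := by
  refine or_iff_not_imp_left.2 fun ht => hM.outranked (hM'.acc htq) htqM fun q' htq' hq' => ht ?_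
  have hne : q' ≠ q := by rintro rfl; exact htqM htq'
  refine ⟨q', htq', fun h => hne (hM'.eq_of_mem h htq), fun q'' htq'' => ?_⟩
  obtain rfl := hM'.eq_of_mem htq'' htq
  exact hq'.asymm

theorem Regresses.regresses_of_mem (hM : I.SuperStable M) (hM' : I.SuperStable M')
    (hs : I.Regresses M M' s) (hsq : (s, q) ∈ M) (htq : (t, q) ∈ M') (htqM : (t, q) ∉ M) :
    I.Regresses M M' t := by
  refine (regresses_or_outranked hM hM'.1 htq htqM).resolve_right fun ht => ?_
  exact (ht.lPrefStrict hsq).asymm ((hs.outranked hM.1 hM' hsq).lPrefStrict htq)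

end SPAST

theorem Finset.card_le_card_of_subset_sdiff {α : Type*} [DecidableEq α] {A B X Y : Finset α}
    (hA : A ⊆ X \ Y) (hB : Y \ X ⊆ B) (hXY : X.card ≤ Y.card) : A.card ≤ B.card :=
  (Finset.card_le_card hA).trans
    ((Finset.card_sdiff_le_card_sdiff_iff.2 hXY).trans (Finset.card_le_card hB))

theorem Finset.card_filter_snd_le_of_forall {α β : Type*} [Fintype β] [DecidableEq β]
    {N N' : Finset (α × β)} {R : β → Prop} [DecidablePred R]
    (h : ∀ b, R b → (N.filter (·.2 = b)).card ≤ (N'.filter (·.2 = b)).card) :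
    (N.filter (R ·.2)).card ≤ (N'.filter (R ·.2)).card := by
  have hmaps : ∀ N : Finset (α × β),
      Set.MapsTo Prod.snd (N.filter (R ·.2) : Set (α × β)) (univ.filter R : Set β) :=
    fun N x hx => by simp_all
  rw [card_eq_sum_card_fiberwise (hmaps N), card_eq_sum_card_fiberwise (hmaps N')]
  refine Finset.sum_le_sum fun b hb => ?_
  have hRb : R b := (Finset.mem_filter.1 hb).2
  calc ((N.filter (R ·.2)).filter (·.2 = b)).card ≤ (N.filter (·.2 = b)).card :=
        Finset.card_le_card (Finset.filter_subset_filter _ (Finset.filter_subset _ _))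
    _ ≤ (N'.filter (·.2 = b)).card := h b hRb
    _ ≤ ((N'.filter (R ·.2)).filter (·.2 = b)).card := by
        refine Finset.card_le_card fun x hx => ?_
        simp only [Finset.mem_filter] at hx ⊢
        exact ⟨⟨hx.1, hx.2 ▸ hRb⟩, hx.2⟩

namespace SPAST

variable {S P L : Type} [Fintype S] [Fintype P] [Fintype L]
  [DecidableEq S] [DecidableEq P] [DecidableEq L]
  {I : SPAST S P L} {M M' : Finset (S × P)} {k : L}

theorem card_regressing_lec_le_of_newcomers_regress (hM : I.IsMatching M)
    (Q : P → Prop) [DecidablePred Q]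
    (hA : ∀ s q, (s, q) ∈ M → I.Regresses M M' s → I.lec q = k → Q q)
    (hQ : ∀ q, Q q → ∀ t, (t, q) ∈ M' → (t, q) ∉ M → I.Regresses M M' t)
    (hcard : (M.filter fun x => I.lec x.2 = k ∧ Q x.2).card ≤
      (M'.filter fun x => I.lec x.2 = k ∧ Q x.2).card) :
    ((M.filter (I.Regresses M M' ·.1)).filter (I.lec ·.2 = k)).card ≤
      ((M'.filter (I.Regresses M M' ·.1)).filter (I.lec ·.2 = k)).card := by
  refine Finset.card_le_card_of_subset_sdiff (fun x hx => ?_) (fun x hx => ?_) hcard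
  · simp only [Finset.mem_filter, Finset.mem_sdiff] at hx ⊢
    obtain ⟨⟨hxM, hreg⟩, hk⟩ := hx
    exact ⟨⟨hxM, hk, hA x.1 x.2 hxM hreg hk⟩, fun h => hreg.not_mem hM hxM h.1⟩
  · simp only [Finset.mem_filter, Finset.mem_sdiff, not_and] at hx ⊢
    obtain ⟨⟨hxM', hk, hq⟩, hxM⟩ := hx
    exact ⟨⟨hxM', hQ x.2 hq x.1 hxM' fun h => hxM h hk hq⟩, hk⟩

theorem card_regressing_lec_le_of_projects_full (hM : I.SuperStable M) (hM' : I.SuperStable M')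
    (hfull : ∀ s q, (s, q) ∈ M → I.Regresses M M' s → I.lec q = k →
      (M'.filter (·.2 = q)).card = I.c q) :
    ((M.filter (I.Regresses M M' ·.1)).filter (I.lec ·.2 = k)).card ≤
      ((M'.filter (I.Regresses M M' ·.1)).filter (I.lec ·.2 = k)).card := by
  refine card_regressing_lec_le_of_newcomers_regress hM.1
    (fun q => ∃ s, (s, q) ∈ M ∧ I.Regresses M M' s) (fun s q hsq hs _ => ⟨s, hsq, hs⟩)
    (fun q ⟨s, hsq, hs⟩ t htq htqM => hs.regresses_of_mem hM hM' hsq htq htqM) ?_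
  refine Finset.card_filter_snd_le_of_forall
    (R := fun q => I.lec q = k ∧ ∃ s, (s, q) ∈ M ∧ I.Regresses M M' s) fun q ⟨hk, s, hsq, hs⟩ => ?_
  rw [hfull s q hsq hs hk]
  exact hM.1.2.2.1 q

theorem card_regressing_lec_le_of_lecturer_full (hM : I.SuperStable M) (hM' : I.SuperStable M')
    {s₀ : S} {p₀ : P} (hsp₀ : (s₀, p₀) ∈ M)
    (hfull : (M'.filter (I.lec ·.2 = I.lec p₀)).card = I.d (I.lec p₀))
    (hbetter : ∀ u q, (u, q) ∈ M' → I.lec q = I.lec p₀ → I.lPrefStrict (I.lec p₀) u s₀) :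
    ((M.filter (I.Regresses M M' ·.1)).filter (I.lec ·.2 = I.lec p₀)).card ≤
      ((M'.filter (I.Regresses M M' ·.1)).filter (I.lec ·.2 = I.lec p₀)).card := by
  let Good : P → Prop := fun q => ∀ t, (t, q) ∈ M' → (t, q) ∉ M → I.Regresses M M' t
  have hbad : ∀ q, I.lec q = I.lec p₀ ∧ ¬Good q →
      (M'.filter (·.2 = q)).card ≤ (M.filter (·.2 = q)).card := by
    rintro q ⟨hq, hgood⟩
    simp only [Good, not_forall] at hgood
    obtain ⟨t, htq, htqM, ht⟩ := hgood
    rcases (regresses_or_outranked hM hM'.1 htq htqM).resolve_left ht with ⟨hc, -⟩ | ⟨-, hworse⟩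
    · rw [hc]; exact hM'.1.2.2.1 q
    · have hs₀t := hworse s₀ p₀ hsp₀ hq.symm
      rw [hq] at hs₀t
      exact absurd (hbetter t q htq hq) hs₀t.asymm
  have hsplit : ∀ N : Finset (S × P),
      (N.filter fun x => I.lec x.2 = I.lec p₀ ∧ Good x.2).card +
        (N.filter fun x => I.lec x.2 = I.lec p₀ ∧ ¬Good x.2).card =
      (N.filter (I.lec ·.2 = I.lec p₀)).card := by
    intro N
    rw [← Finset.card_filter_add_card_filter_not (s := N.filter (I.lec ·.2 = I.lec p₀))
      (fun x => Good x.2), Finset.filter_filter, Finset.filter_filter]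
  refine card_regressing_lec_le_of_newcomers_regress hM.1 Good
    (fun s q hsq hs _ t htq htqM => hs.regresses_of_mem hM hM' hsq htq htqM) (fun q hq => hq) ?_
  have hM'M := Finset.card_filter_snd_le_of_forall (N := M') (N' := M) hbad
  have hMd := hM.1.2.2.2 (I.lec p₀)
  have := hsplit M
  have := hsplit M'
  omega

theorem card_regressing_lec_le (hM : I.SuperStable M) (hM' : I.SuperStable M') (k : L) :
    ((M.filter (I.Regresses M M' ·.1)).filter (I.lec ·.2 = k)).card ≤
      ((M'.filter (I.Regresses M M' ·.1)).filter (I.lec ·.2 = k)).card := by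
  by_cases hlec : ∃ s₀ p₀, (s₀, p₀) ∈ M ∧ I.Regresses M M' s₀ ∧ I.lec p₀ = k ∧
      (M'.filter (I.lec ·.2 = I.lec p₀)).card = I.d (I.lec p₀) ∧
      ∀ u q, (u, q) ∈ M' → I.lec q = I.lec p₀ → I.lPrefStrict (I.lec p₀) u s₀
  · obtain ⟨s₀, p₀, hsp₀, hs₀, rfl, hfull, hbetter⟩ := hlec
    exact card_regressing_lec_le_of_lecturer_full hM hM' hsp₀ hfull hbetter
  · refine card_regressing_lec_le_of_projects_full hM hM' fun s q hsq hs hk => ?_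
    rcases hs.outranked hM.1 hM' hsq with ⟨hc, -⟩ | hl
    · exact hc
    · exact absurd ⟨s, q, hsq, hs, hk, hl⟩ hlec

theorem card_regressing_le (hM : I.SuperStable M) (hM' : I.SuperStable M') :
    (M.filter (I.Regresses M M' ·.1)).card ≤ (M'.filter (I.Regresses M M' ·.1)).card := by
  have hmaps : ∀ N : Finset (S × P),
      Set.MapsTo (fun x => I.lec x.2) (N : Set (S × P)) (Finset.univ : Finset L) :=
    fun _ _ _ => Finset.mem_coe.2 (Finset.mem_univ _)
  rw [Finset.card_eq_sum_card_fiberwise (hmaps _), Finset.card_eq_sum_card_fiberwise (hmaps _)]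
  exact Finset.sum_le_sum fun k _ => card_regressing_lec_le hM hM' k

theorem Regresses.exists_mem (hM : I.SuperStable M) (hM' : I.SuperStable M') {s : S}
    (hs : I.Regresses M M' s) : ∃ q, (s, q) ∈ M' := by
  have hM_image : (M.filter (I.Regresses M M' ·.1)).image Prod.fst =
      Finset.univ.filter (I.Regresses M M') := by
    ext t
    simp only [Finset.mem_image, Finset.mem_filter, Finset.mem_univ, true_and]
    refine ⟨fun ⟨x, ⟨_, hx⟩, hxt⟩ => hxt ▸ hx, fun ht => ?_⟩
    obtain ⟨p, htp, -⟩ := id ht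
    exact ⟨(t, p), ⟨htp, ht⟩, rfl⟩
  have hM'_image : (M'.filter (I.Regresses M M' ·.1)).image Prod.fst =
      Finset.univ.filter (I.Regresses M M') := by
    refine Finset.eq_of_subset_of_card_le (fun t ht => ?_) ?_
    · obtain ⟨x, hx, rfl⟩ := Finset.mem_image.1 ht
      simpa using (Finset.mem_filter.1 hx).2
    · rw [← hM_image, Finset.card_image_of_injOn, Finset.card_image_of_injOn]
      · exact card_regressing_le hM hM'
      · exact hM'.1.injOn_fst.mono (Finset.coe_subset.2 (Finset.filter_subset _ _))
      · exact hM.1.injOn_fst.mono (Finset.coe_subset.2 (Finset.filter_subset _ _))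
  obtain ⟨x, hx, rfl⟩ :=
    Finset.mem_image.1 (hM'_image ▸ Finset.mem_filter.2 ⟨Finset.mem_univ s, hs⟩)
  exact ⟨x.2, (Finset.mem_filter.1 hx).1⟩

end SPAST

open SPAST in
theorem super_stable_same_unmatched {S P L : Type} [Fintype S] [Fintype P] [Fintype L]
    [DecidableEq S] [DecidableEq P] [DecidableEq L]
    (I : SPAST S P L) (M1 M2 : Finset (S × P))
    (h1 : SuperStable I M1) (h2 : SuperStable I M2) :
    ∀ s : S, (∀ p : P, (s, p) ∉ M1) ↔ (∀ p : P, (s, p) ∉ M2) := by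
  intro s
  have unmatched_of_unmatched : ∀ {M M' : Finset (S × P)}, SuperStable I M → SuperStable I M' →
      (∀ p, (s, p) ∉ M') → ∀ p, (s, p) ∉ M := by
    intro M M' hM hM' hs p hsp
    have hreg : I.Regresses M M' s := ⟨p, hsp, hs p, fun q hq => (hs q hq).elim⟩
    obtain ⟨q, hq⟩ := hreg.exists_mem hM hM'
    exact hs q hq
  exact ⟨unmatched_of_unmatched h2 h1, unmatched_of_unmatched h1 h2⟩
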